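/- arXiv:1403.7712 — 4 statements merged into one kernel-verified Lean document; each statement's English description precedes it below -/
import Mathlib

section
/- Define Z : ℝ² → ℂ by Z(x₁,x₂) = e^{i x₁} + 2 e^{−i x₁/2} cos(√3 x₂ / 2), let T̄ ⊂ ℝ² be the closed triangle equal to the convex hull of the three points (0,0), (4π/3, 0), (2π/3, 2π/√3), and let ρ(u,v) = 27 + 8u³ − 24uv² − 18(u² + v²) − (u² + v²)². Then: (i) the restriction of Z to T̄ is injective; (ii) Z(T̄) = { u + iv ∈ ℂ : ρ(u,v) ≥ 0 } (the closed region bounded by the deltoid curve); (iii) Z(ℝ²) = Z(T̄). -/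
/-!
With `α = x₁`, `β = (-x₁ + √3 x₂)/2`, `γ = (-x₁ - √3 x₂)/2` we have
`Z(x) = e^{iα} + e^{iβ} + e^{iγ}`, the trace of `diag(e^{iα}, e^{iβ}, e^{iγ}) ∈ SU(3)`, and `T̄` is
the alcove `γ ≤ β ≤ α ≤ γ + 2π`. Since `α + β + γ = 0`, the trace `c` determines the characteristic
polynomial `t³ - c t² + c̄ t - 1`, hence the eigenvalues; the angles of two alcove points with the
same eigenvalues agree up to a permutation and multiples of `2π`, which the alcove inequalities
force to be trivial: this is (i).
Conversely, reducing the angles to `(-π, π]` and sorting them moves any triple into the alcove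
without changing the eigenvalues: this is (iii).

For (ii), write `Z = e^{2iθ} + σ e^{-iθ}` with `θ = x₁/2`, `σ = 2 cos(√3 x₂/2)`; then
`ρ(Z) = (2 cos 3θ - σ)² (4 - σ²)`. Every `c ∈ ℂ` has this form for real `θ, σ` (choose `θ` with
`Im(c e^{iθ}) = sin 3θ` by the intermediate value theorem), and `ρ(c) ≥ 0` forces `|σ| ≤ 2`.
-/

noncomputable section

/-- The map `Z(x₁,x₂) = e^{i x₁} + 2 e^{-i x₁/2} cos(√3 x₂ / 2)`. -/
def Zmap (x : ℝ × ℝ) : ℂ :=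
  Complex.exp (Complex.I * (x.1 : ℂ)) +
    2 * Complex.exp (-Complex.I * (x.1 : ℂ) / 2) * ((Real.cos (Real.sqrt 3 * x.2 / 2) : ℝ) : ℂ)

/-- The quartic polynomial whose nonnegativity locus is the closed deltoid region. -/
def ρdel (u v : ℝ) : ℝ :=
  27 + 8 * u ^ 3 - 24 * u * v ^ 2 - 18 * (u ^ 2 + v ^ 2) - (u ^ 2 + v ^ 2) ^ 2

/-- The closed triangle with vertices `(0,0)`, `(4π/3, 0)`, `(2π/3, 2π/√3)`. -/
def Tri : Set (ℝ × ℝ) :=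
  convexHull ℝ {(0, 0), (4 * Real.pi / 3, 0), (2 * Real.pi / 3, 2 * Real.pi / Real.sqrt 3)}

open Real Set

theorem eq_and_eq_or_eq_and_eq_of_add_eq_of_mul_eq {R : Type*} [CommRing R] [NoZeroDivisors R]
    {a b a' b' : R} (h₁ : a + b = a' + b') (h₂ : a * b = a' * b') :
    (a' = a ∧ b' = b) ∨ (a' = b ∧ b' = a) := by
  have : (a' - a) * (a' - b) = 0 := by linear_combination (-a') * h₁ + h₂
  rcases mul_eq_zero.mp this with h | h
  · exact .inl ⟨sub_eq_zero.mp h, by linear_combination -h₁ - h⟩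
  · exact .inr ⟨sub_eq_zero.mp h, by linear_combination -h₁ - h⟩

theorem eq_perm_of_esymm_eq {R : Type*} [CommRing R] [NoZeroDivisors R] {a b c a' b' c' : R}
    (h₁ : a + b + c = a' + b' + c') (h₂ : a * b + a * c + b * c = a' * b' + a' * c' + b' * c')
    (h₃ : a * b * c = a' * b' * c') :
    (a' = a ∧ b' = b ∧ c' = c) ∨ (a' = a ∧ b' = c ∧ c' = b) ∨ (a' = b ∧ b' = a ∧ c' = c) ∨
      (a' = b ∧ b' = c ∧ c' = a) ∨ (a' = c ∧ b' = a ∧ c' = b) ∨ (a' = c ∧ b' = b ∧ c' = a) := by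
  have : (a' - a) * (a' - b) * (a' - c) = 0 := by
    linear_combination (-a' ^ 2) * h₁ + a' * h₂ - h₃
  rcases mul_eq_zero.mp this with h | h
  rcases mul_eq_zero.mp h with h | h
  all_goals
    obtain rfl := sub_eq_zero.mp h
  · rcases eq_and_eq_or_eq_and_eq_of_add_eq_of_mul_eq (a := b) (b := c) (a' := b') (b' := c')
      (by linear_combination h₁) (by linear_combination h₂ - a' * h₁) with ⟨rfl, rfl⟩ | ⟨rfl, rfl⟩
    all_goals simp
  · rcases eq_and_eq_or_eq_and_eq_of_add_eq_of_mul_eq (a := a) (b := c) (a' := b') (b' := c')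
      (by linear_combination h₁) (by linear_combination h₂ - a' * h₁) with ⟨rfl, rfl⟩ | ⟨rfl, rfl⟩
    all_goals simp
  · rcases eq_and_eq_or_eq_and_eq_of_add_eq_of_mul_eq (a := a) (b := b) (a' := b') (b' := c')
      (by linear_combination h₁) (by linear_combination h₂ - a' * h₁) with ⟨rfl, rfl⟩ | ⟨rfl, rfl⟩
    all_goals simp

theorem esymm_two_eq_conj {u v w : Circle} (h : u * v * w = 1) :
    (u : ℂ) * v + u * w + v * w = (starRingEnd ℂ) ((u : ℂ) + v + w) := by
  have huv : u * v = w⁻¹ := eq_inv_of_mul_eq_one_left h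
  have huw : u * w = v⁻¹ := eq_inv_of_mul_eq_one_left (by rw [← h]; ac_rfl)
  have hvw : v * w = u⁻¹ := eq_inv_of_mul_eq_one_left (by rw [← h]; ac_rfl)
  simp only [← Circle.coe_mul, huv, huw, hvw, Circle.coe_inv_eq_conj, map_add]
  ring

theorem Circle.exp_mul_exp_mul_exp_eq_one {a b c : ℝ} (h : a + b + c = 0) :
    Circle.exp a * Circle.exp b * Circle.exp c = 1 := by
  rw [← Circle.exp_add, ← Circle.exp_add, h, Circle.exp_zero]

theorem abs_lt_of_abs_mul_two_pi_lt {m : ℤ} {k : ℕ} (h : |m * (2 * π)| < k * (2 * π)) :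
    |m| < k := by
  rw [abs_mul, abs_of_pos (by positivity : (0 : ℝ) < 2 * π)] at h
  exact_mod_cast lt_of_mul_lt_mul_right h (by positivity)

theorem eq_sub_two_pi_or_eq_or_eq_add_two_pi_of_exp_eq {s t : ℝ}
    (h : Circle.exp s = Circle.exp t) (hst : |s - t| < 4 * π) :
    s = t - 2 * π ∨ s = t ∨ s = t + 2 * π := by
  obtain ⟨m, rfl⟩ := Circle.exp_eq_exp.mp h
  rw [add_sub_cancel_left] at hst
  obtain ⟨hlo, hhi⟩ := abs_lt.mp
    (abs_lt_of_abs_mul_two_pi_lt (m := m) (k := 2) (by push_cast; linarith))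
  interval_cases m
  · exact .inl (by push_cast; ring)
  · exact .inr (.inl (by simp))
  · exact .inr (.inr (by push_cast; ring))

def IsAlcove (a b c : ℝ) : Prop :=
  a + b + c = 0 ∧ c ≤ b ∧ b ≤ a ∧ a ≤ c + 2 * π

theorem IsAlcove.eq_of_sum_exp_eq {a b c a' b' c' : ℝ} (h : IsAlcove a b c)
    (h' : IsAlcove a' b' c')
    (he : (Circle.exp a : ℂ) + Circle.exp b + Circle.exp c =
      Circle.exp a' + Circle.exp b' + Circle.exp c') :
    a' = a ∧ b' = b := by
  have hprod := Circle.exp_mul_exp_mul_exp_eq_one h.1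
  have hprod' := Circle.exp_mul_exp_mul_exp_eq_one h'.1
  have e₂ := (esymm_two_eq_conj hprod).trans
    ((congrArg _ he).trans (esymm_two_eq_conj hprod').symm)
  have e₃ : (Circle.exp a : ℂ) * Circle.exp b * Circle.exp c =
      Circle.exp a' * Circle.exp b' * Circle.exp c' := by
    simp only [← Circle.coe_mul, hprod, hprod']
  obtain ⟨hs, hcb, hba, hac⟩ := h
  obtain ⟨hs', hcb', hba', hac'⟩ := h'
  have := pi_pos
  rcases eq_perm_of_esymm_eq he e₂ e₃ with ⟨h₁, h₂, -⟩ | ⟨h₁, h₂, -⟩ | ⟨h₁, h₂, -⟩ |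
      ⟨h₁, h₂, -⟩ | ⟨h₁, h₂, -⟩ | ⟨h₁, h₂, -⟩ <;>
    rcases eq_sub_two_pi_or_eq_or_eq_add_two_pi_of_exp_eq (Circle.coe_inj.mp h₁)
      (abs_lt.mpr ⟨by linarith, by linarith⟩) with h₁ | h₁ | h₁ <;>
    rcases eq_sub_two_pi_or_eq_or_eq_add_two_pi_of_exp_eq (Circle.coe_inj.mp h₂)
      (abs_lt.mpr ⟨by linarith, by linarith⟩) with h₂ | h₂ | h₂ <;>
    constructor <;> linarith

theorem exists_isAlcove_of_mem_Ioc {p q r : ℝ} (hp : p ∈ Ioc (-π) π) (hr : r ∈ Ioc (-π) π)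
    (hrq : r ≤ q) (hqp : q ≤ p) (h : Circle.exp (p + q + r) = 1) :
    ∃ a b c, IsAlcove a b c ∧ (Circle.exp a : ℂ) + Circle.exp b + Circle.exp c =
      Circle.exp p + Circle.exp q + Circle.exp r := by
  obtain ⟨N, hN⟩ := Circle.exp_eq_one.mp h
  obtain ⟨hp₁, hp₂⟩ := hp
  obtain ⟨hr₁, hr₂⟩ := hr
  obtain ⟨hlo, hhi⟩ := abs_lt.mp
    (abs_lt_of_abs_mul_two_pi_lt (m := N) (k := 2)
      (by rw [← hN, abs_lt]; push_cast; constructor <;> linarith))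
  interval_cases N <;> push_cast at hN
  · refine ⟨r + 2 * π, p, q, ⟨by linarith, by linarith, by linarith, by linarith⟩, ?_⟩
    rw [Circle.exp_add_two_pi]; ring
  · exact ⟨p, q, r, ⟨by linarith, by linarith, by linarith, by linarith⟩, rfl⟩
  · refine ⟨q, r, p - 2 * π, ⟨by linarith, by linarith, by linarith, by linarith⟩, ?_⟩
    rw [Circle.exp_sub_two_pi]; ring

theorem exists_isAlcove_sum_exp_eq {u v w : Circle} (h : u * v * w = 1) :
    ∃ a b c, IsAlcove a b c ∧ (Circle.exp a : ℂ) + Circle.exp b + Circle.exp c = u + v + w := by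
  wlog hvu : Complex.arg v ≤ Complex.arg u generalizing u v w
  · obtain ⟨a, b, c, habc, he⟩ := this (u := v) (v := u) (w := w) (by rw [← h]; ac_rfl)
      (le_of_not_ge hvu)
    exact ⟨a, b, c, habc, by rw [he]; ring⟩
  wlog hwv : Complex.arg w ≤ Complex.arg v generalizing u v w
  · rcases le_total (Complex.arg w) (Complex.arg u) with hwu | huw
    · obtain ⟨a, b, c, habc, he⟩ := this (u := u) (v := w) (w := v) (by rw [← h]; ac_rfl) hwu
        (le_of_not_ge hwv)
      exact ⟨a, b, c, habc, by rw [he]; ring⟩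
    · obtain ⟨a, b, c, habc, he⟩ := this (u := w) (v := u) (w := v) (by rw [← h]; ac_rfl) huw hvu
      exact ⟨a, b, c, habc, by rw [he]; ring⟩
  have hIoc (z : Circle) : Complex.arg z ∈ Ioc (-π) π :=
    ⟨Complex.neg_pi_lt_arg _, Complex.arg_le_pi _⟩
  simpa only [Circle.exp_arg] using exists_isAlcove_of_mem_Ioc (hIoc u) (hIoc w) hwv hvu
    (by simpa only [Circle.exp_add, Circle.exp_arg] using h)

def deltoidMap (θ σ : ℝ) : ℂ := Circle.exp (2 * θ) + σ * Circle.exp (-θ)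

theorem deltoidMap_re (θ σ : ℝ) : (deltoidMap θ σ).re = cos (2 * θ) + σ * cos θ := by
  simp only [deltoidMap, Circle.coe_exp, Complex.add_re, Complex.mul_re, Complex.ofReal_re,
    Complex.ofReal_im, Complex.exp_ofReal_mul_I_re, Complex.exp_ofReal_mul_I_im, cos_neg]
  ring

theorem deltoidMap_im (θ σ : ℝ) : (deltoidMap θ σ).im = sin (2 * θ) - σ * sin θ := by
  simp only [deltoidMap, Circle.coe_exp, Complex.add_im, Complex.mul_im, Complex.ofReal_re,
    Complex.ofReal_im, Complex.exp_ofReal_mul_I_re, Complex.exp_ofReal_mul_I_im, sin_neg]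
  ring

theorem ρdel_deltoidMap (θ σ : ℝ) :
    ρdel (deltoidMap θ σ).re (deltoidMap θ σ).im = (2 * cos (3 * θ) - σ) ^ 2 * (4 - σ ^ 2) := by
  have him : (deltoidMap θ σ).im ^ 2 = (1 - cos θ ^ 2) * (2 * cos θ - σ) ^ 2 := by
    rw [deltoidMap_im, sin_two_mul, ← sin_sq]; ring
  rw [ρdel, him, deltoidMap_re, cos_two_mul, cos_three_mul]
  ring

theorem exists_deltoidMap_eq (c : ℂ) : ∃ θ σ, deltoidMap θ σ = c := by
  set g : ℝ → ℝ := fun θ ↦ (c * Circle.exp θ).im - sin (3 * θ)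
  have h0 : (0 : ℝ) ∈ uIcc (g 0) (g π) := by
    have hπ : g π = -c.im := by
      simp [g, show sin (3 * π) = 0 by exact_mod_cast sin_nat_mul_pi 3]
    rw [hπ, show g 0 = c.im by simp [g], mem_uIcc]
    rcases le_total c.im 0 with h | h
    · exact .inl ⟨h, by linarith⟩
    · exact .inr ⟨by linarith, h⟩
  obtain ⟨θ, -, hθ⟩ := intermediate_value_uIcc (by fun_prop : Continuous g).continuousOn h0
  set σ := (c * Circle.exp θ).re - cos (3 * θ)
  have hc : c * Circle.exp θ = Circle.exp (3 * θ) + σ := by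
    apply Complex.ext
    · simp only [σ, Complex.add_re, Circle.coe_exp, Complex.exp_ofReal_mul_I_re, Complex.ofReal_re]
      ring
    · rw [Complex.add_im, Complex.ofReal_im, add_zero, sub_eq_zero.mp hθ, Circle.coe_exp,
        Complex.exp_ofReal_mul_I_im]
  refine ⟨θ, σ, ?_⟩
  calc deltoidMap θ σ = (Circle.exp (3 * θ) + σ) * Circle.exp (-θ) := by
        rw [deltoidMap, add_mul, ← Circle.coe_mul, ← Circle.exp_add]; ring_nf
    _ = c := by
        rw [← hc, mul_assoc, ← Circle.coe_mul, ← Circle.exp_add, add_neg_cancel, Circle.exp_zero,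
          Circle.coe_one, mul_one]

theorem deltoidMap_two_mul_cos (θ ψ : ℝ) :
    deltoidMap θ (2 * cos ψ) =
      Circle.exp (2 * θ) + Circle.exp (-θ + ψ) + Circle.exp (-θ - ψ) := by
  simp only [deltoidMap, Circle.coe_exp]
  push_cast
  rw [Complex.two_cos, add_mul, ← Complex.exp_add, ← Complex.exp_add]
  ring_nf

theorem Zmap_eq_deltoidMap (x : ℝ × ℝ) :
    Zmap x = deltoidMap (x.1 / 2) (2 * cos (√3 * x.2 / 2)) := by
  simp only [Zmap, deltoidMap, Circle.coe_exp]
  push_cast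
  ring_nf

theorem ρdel_Zmap_nonneg (x : ℝ × ℝ) : 0 ≤ ρdel (Zmap x).re (Zmap x).im := by
  rw [Zmap_eq_deltoidMap, ρdel_deltoidMap]
  exact mul_nonneg (sq_nonneg _) (by nlinarith [cos_sq_le_one (√3 * x.2 / 2)])

theorem exists_Zmap_eq_of_ρdel_nonneg {c : ℂ} (hc : 0 ≤ ρdel c.re c.im) : ∃ x, Zmap x = c := by
  obtain ⟨θ, σ, rfl⟩ := exists_deltoidMap_eq c
  rw [ρdel_deltoidMap] at hc
  have hσ : σ ^ 2 ≤ 4 := by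
    by_contra! hσ
    have h2 := pow_eq_zero_iff (n := 2) two_ne_zero |>.mp <|
      le_antisymm (nonpos_of_mul_nonneg_left hc (by linarith)) (sq_nonneg _)
    nlinarith [cos_sq_le_one (3 * θ)]
  refine ⟨(2 * θ, 2 * arccos (σ / 2) / √3), ?_⟩
  rw [Zmap_eq_deltoidMap, mul_div_cancel_left₀ _ two_ne_zero,
    mul_div_cancel₀ _ (by positivity : √3 ≠ 0), mul_div_cancel_left₀ _ two_ne_zero,
    cos_arccos (by nlinarith) (by nlinarith), mul_div_cancel₀ _ two_ne_zero]

def angle₂ (x : ℝ × ℝ) : ℝ := (-x.1 + √3 * x.2) / 2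

def angle₃ (x : ℝ × ℝ) : ℝ := (-x.1 - √3 * x.2) / 2

theorem angle₂_mk {a b c : ℝ} (h : a + b + c = 0) : angle₂ (a, (b - c) / √3) = b := by
  rw [angle₂, mul_div_cancel₀ _ (by positivity)]; linarith

theorem angle₃_mk {a b c : ℝ} (h : a + b + c = 0) : angle₃ (a, (b - c) / √3) = c := by
  rw [angle₃, mul_div_cancel₀ _ (by positivity)]; linarith

theorem Zmap_eq_sum_exp (x : ℝ × ℝ) :
    Zmap x = Circle.exp x.1 + Circle.exp (angle₂ x) + Circle.exp (angle₃ x) := by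
  rw [Zmap_eq_deltoidMap, deltoidMap_two_mul_cos, angle₂, angle₃]
  ring_nf

theorem convex_setOf_isAlcove_angles :
    Convex ℝ {x : ℝ × ℝ | IsAlcove x.1 (angle₂ x) (angle₃ x)} := by
  rintro p ⟨-, hp₁, hp₂, hp₃⟩ q ⟨-, hq₁, hq₂, hq₃⟩ s t hs ht hst
  simp only [angle₂, angle₃] at *
  refine ⟨by ring, ?_, ?_, ?_⟩ <;>
    simp only [Prod.fst_add, Prod.snd_add, Prod.smul_fst, Prod.smul_snd, smul_eq_mul] <;>
    nlinarith

theorem mem_Tri_iff {x : ℝ × ℝ} : x ∈ Tri ↔ IsAlcove x.1 (angle₂ x) (angle₃ x) := by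
  have hπ := pi_pos
  have h3 : (0 : ℝ) < √3 := by positivity
  constructor
  · refine fun hx ↦ convexHull_min ?_ convex_setOf_isAlcove_angles hx
    have hv : √3 * (2 * π / √3) = 2 * π := mul_div_cancel₀ _ h3.ne'
    rintro p (rfl | rfl | rfl) <;> refine ⟨?_, ?_, ?_, ?_⟩ <;> simp only [angle₂, angle₃, hv] <;>
      linarith
  · rintro ⟨-, hcb, hba, hac⟩
    -- the gaps between consecutive angles are the barycentric coordinates
    refine mem_convexHull_of_exists_fintype
      ![(angle₃ x + 2 * π - x.1) / (2 * π), (x.1 - angle₂ x) / (2 * π),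
        (angle₂ x - angle₃ x) / (2 * π)]
      ![(0, 0), (4 * π / 3, 0), (2 * π / 3, 2 * π / √3)] ?_ ?_ ?_ ?_
    · intro i
      fin_cases i <;> exact div_nonneg (by linarith) (by positivity)
    · simp only [Fin.sum_univ_three, Matrix.cons_val]
      field_simp
      ring
    · intro i
      fin_cases i <;> simp
    · rw [Fin.sum_univ_three]
      ext <;>
        simp only [Matrix.cons_val, Prod.smul_mk, smul_eq_mul, Prod.mk_add_mk, angle₂, angle₃] <;>
        field_simp <;> ring

theorem exists_mem_Tri_Zmap_eq (x : ℝ × ℝ) : ∃ y ∈ Tri, Zmap y = Zmap x := by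
  obtain ⟨a, b, c, habc, he⟩ := exists_isAlcove_sum_exp_eq
    (Circle.exp_mul_exp_mul_exp_eq_one (a := x.1) (b := angle₂ x) (c := angle₃ x)
      (by rw [angle₂, angle₃]; ring))
  refine ⟨(a, (b - c) / √3), mem_Tri_iff.mpr ?_, ?_⟩
  · rwa [angle₂_mk habc.1, angle₃_mk habc.1]
  · rw [Zmap_eq_sum_exp, Zmap_eq_sum_exp, angle₂_mk habc.1, angle₃_mk habc.1]
    exact he

theorem Zmap_injOn : InjOn Zmap Tri := by
  intro x hx y hy hxy
  rw [Zmap_eq_sum_exp, Zmap_eq_sum_exp] at hxy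
  obtain ⟨h₁, h₂⟩ := (mem_Tri_iff.mp hx).eq_of_sum_exp_eq (mem_Tri_iff.mp hy) hxy
  have h3 : (0 : ℝ) < √3 := by positivity
  refine Prod.ext h₁.symm (mul_left_cancel₀ h3.ne' ?_)
  rw [angle₂, angle₂] at h₂
  linarith

theorem stmt_2 :
    Set.InjOn Zmap Tri ∧
    Zmap '' Tri = {c : ℂ | 0 ≤ ρdel c.re c.im} ∧
    Zmap '' Set.univ = Zmap '' Tri := by
  have hreduce : Zmap '' univ ⊆ Zmap '' Tri := by
    rintro _ ⟨x, -, rfl⟩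
    exact exists_mem_Tri_Zmap_eq x
  refine ⟨Zmap_injOn, subset_antisymm ?_ fun c hc ↦ ?_,
    hreduce.antisymm (image_mono (subset_univ _))⟩
  · rintro _ ⟨x, -, rfl⟩
    exact ρdel_Zmap_nonneg x
  · obtain ⟨x, rfl⟩ := exists_Zmap_eq_of_ρdel_nonneg hc
    exact hreduce (mem_image_of_mem _ (mem_univ x))
end
end

section
/- Let λ ∈ ℝ and let f ∈ ℝ[Z,W] be a nonzero polynomial of total degree n such that L_λ f = −μ f for some real number μ. Then there exist natural numbers p, q with p + q = n and μ = (λ − 1)(p + q) + p² + q² + pq. -/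
/-!
The operator `L_λ` does not raise total degree, and modulo terms of lower degree it acts on a
monomial `Z^p W^q` as multiplication by `-((λ - 1)(p + q) + p² + q² + pq)`: the parts
`W ∂²_Z`, `∂_Z ∂_W` and `Z ∂²_W` lower the degree, while the remaining parts are polynomials in
the Euler operators `Z ∂_Z` and `W ∂_W`. Comparing the coefficients of `L_λ f = -μ f` at a
monomial of maximal degree `n` of `f` therefore gives `μ` in the stated form.
-/

noncomputable section

open MvPolynomial

/-- The deltoid operator `L_λ` on `ℝ[Z,W]`, with `Z = X 0` and `W = X 1`. -/
def Lop (lam : ℝ) (f : MvPolynomial (Fin 2) ℝ) : MvPolynomial (Fin 2) ℝ :=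
  (X 1 - (X 0) ^ 2) * pderiv 0 (pderiv 0 f)
    + (1 - X 0 * X 1) * pderiv 0 (pderiv 1 f)
    + (X 0 - (X 1) ^ 2) * pderiv 1 (pderiv 1 f)
    - C lam * X 0 * pderiv 0 f
    - C lam * X 1 * pderiv 1 f

namespace MvPolynomial

section CommSemiring

variable {R σ : Type*} [CommSemiring R] {f : MvPolynomial σ R} {m : σ →₀ ℕ}

theorem coeff_X_mul_pderiv (i : σ) : coeff m (X i * pderiv i f) = m i * coeff m f := by
  classical
  by_cases hm : m i = 0
  · rw [coeff_X_mul', if_neg (by simpa using hm), hm, Nat.cast_zero, zero_mul]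
  · obtain ⟨m', rfl⟩ :=
      exists_add_of_le (Finsupp.single_le_iff.mpr (Nat.one_le_iff_ne_zero.mpr hm))
    rw [coeff_X_mul, coeff_pderiv, add_comm]
    simp [mul_comm, add_comm]

theorem coeff_X_mul_X_mul_pderiv_pderiv {i j : σ} (hij : i ≠ j) :
    coeff m (X i * X j * pderiv i (pderiv j f)) = m i * m j * coeff m f := by
  have hfactor : X i * X j * pderiv i (pderiv j f) = X i * pderiv i (X j * pderiv j f) := by
    rw [pderiv_mul, pderiv_X_of_ne hij.symm]
    ring
  rw [hfactor, coeff_X_mul_pderiv, coeff_X_mul_pderiv, mul_assoc]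

theorem coeff_pderiv_pderiv_eq_zero (i k : σ) (h : f.totalDegree < m.degree + 2) :
    coeff m (pderiv i (pderiv k f)) = 0 := by
  rw [coeff_pderiv, coeff_pderiv, coeff_eq_zero_of_totalDegree_lt, zero_mul, zero_mul]
  rw [← Finsupp.degree_apply, map_add, map_add, Finsupp.degree_single, Finsupp.degree_single]
  omega

theorem coeff_X_mul_pderiv_pderiv_eq_zero (j i k : σ) (h : f.totalDegree ≤ m.degree) :
    coeff m (X j * pderiv i (pderiv k f)) = 0 := by
  classical
  by_cases hm : m j = 0
  · rw [coeff_X_mul', if_neg (by simpa using hm)]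
  · obtain ⟨m', rfl⟩ :=
      exists_add_of_le (Finsupp.single_le_iff.mpr (Nat.one_le_iff_ne_zero.mpr hm))
    rw [coeff_X_mul]
    rw [map_add, Finsupp.degree_single] at h
    exact coeff_pderiv_pderiv_eq_zero i k (by omega)

end CommSemiring

theorem coeff_X_sq_mul_pderiv_pderiv {R σ : Type*} [CommRing R] {f : MvPolynomial σ R}
    {m : σ →₀ ℕ} (i : σ) :
    coeff m (X i ^ 2 * pderiv i (pderiv i f)) = m i * (m i - 1) * coeff m f := by
  have hEuler : X i ^ 2 * pderiv i (pderiv i f)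
      = X i * pderiv i (X i * pderiv i f) - X i * pderiv i f := by
    rw [pderiv_mul, pderiv_X_self]
    ring
  rw [hEuler, coeff_sub, coeff_X_mul_pderiv, coeff_X_mul_pderiv]
  ring

end MvPolynomial

theorem coeff_Lop_of_totalDegree_le (lam : ℝ) {f : MvPolynomial (Fin 2) ℝ} {m : Fin 2 →₀ ℕ}
    (h : f.totalDegree ≤ m.degree) :
    coeff m (Lop lam f) = -((lam - 1) * ((m 0 : ℝ) + m 1) + (m 0 : ℝ) ^ 2 + (m 1 : ℝ) ^ 2
      + (m 0 : ℝ) * m 1) * coeff m f := by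
  have hmixed : coeff m (pderiv 0 (pderiv 1 f)) = 0 := coeff_pderiv_pderiv_eq_zero 0 1 (by omega)
  simp only [Lop, coeff_add, coeff_sub, sub_mul, one_mul, mul_assoc (C lam), coeff_C_mul,
    coeff_X_mul_pderiv, coeff_X_sq_mul_pderiv_pderiv,
    coeff_X_mul_X_mul_pderiv_pderiv (show (0 : Fin 2) ≠ 1 by decide),
    coeff_X_mul_pderiv_pderiv_eq_zero _ _ _ h, hmixed]
  ring

theorem stmt_5 (lam : ℝ) (f : MvPolynomial (Fin 2) ℝ) (n : ℕ) (μ : ℝ)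
    (hf : f ≠ 0) (hdeg : f.totalDegree = n)
    (heig : Lop lam f = -(C μ * f)) :
    ∃ p q : ℕ, p + q = n ∧
      μ = (lam - 1) * ((p : ℝ) + q) + (p : ℝ) ^ 2 + (q : ℝ) ^ 2 + (p : ℝ) * q := by
  obtain ⟨d, hd, hsup⟩ :=
    Finset.exists_mem_eq_sup f.support (support_nonempty.mpr hf) Finsupp.degree
  have htop : f.totalDegree = d.degree := hsup
  have hcoeff := congrArg (coeff d) heig
  rw [coeff_Lop_of_totalDegree_le lam htop.le, coeff_neg, coeff_C_mul, neg_mul, neg_inj] at hcoeff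
  refine ⟨d 0, d 1, ?_, (mul_right_cancel₀ (mem_support_iff.mp hd) hcoeff).symm⟩
  rw [← hdeg, htop, Finsupp.degree_eq_sum, Fin.sum_univ_two]
end
end

section
/- Let (T_p)_{p∈ℤ} ⊆ ℝ[Z,W] be defined by T₀ = 3, T₁ = 3Z, T₂ = 9Z² − 6W and the two-sided recurrence T_{p+3} = 3Z·T_{p+2} − 3W·T_{p+1} + T_p for all p ∈ ℤ, and set Q_p = 3^{−|p|} T_p. Let L₁ be the deltoid operator with λ = 1. Then: (i) for all integers p, q ≥ 1, the polynomial R_{p,q} := Q_p Q_{−q} − 3^{−2·min(p,q)} Q_{p−q} satisfies L₁ R_{p,q} = −(p² + q² + pq) R_{p,q}, and R_{p,q} = Z^p W^q + terms of strictly smaller total degree; (ii) for all integers p ≥ q ≥ 0, L₁(Q_p Q_q − Q_{p+q}) = −(p² + q² − pq)(Q_p Q_q − Q_{p+q}). -/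
/-!
By Newton's identities `T p = x ^ p + y ^ p + z ^ p`, where `x, y, z` are the roots of
`t³ - 3 Z t² + 3 W t - 1`; since `x y z = 1` this makes sense for every `p : ℤ`.

Let `Γ(f, g) = L(f g) - f L g - g L f` be the carré du champ of `L = L₁`, a derivation in each
argument. The identities `Γ(Z, T p) = p (Z T p - T (p + 1))`, `Γ(W, T p) = p (T (p - 1) - W T p)`,
`L T p = -p² T p`, a product formula for the `T`'s, and `Γ(T a, T b) = a b (T a T b - 3 T (a + b))`
follow one from the other; each is an equality of two `ℤ`-indexed sequences whose difference
satisfies the recurrence, so it only has to be checked at `p = 0, 1, 2`. The product rule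
then yields `L (T a T b - T (a + b)) = -(a² + b² - a b) (T a T b - T (a + b))`; the powers of `3`
in `Q` only rescale. For the leading term, `T p = 3 ^ p Z ^ p + (lower degree)` and
`T (-q) = 3 ^ q W ^ q + (lower degree)` for `p, q ≥ 1`.
-/

noncomputable section

open MvPolynomial

@[simp] theorem Derivation.map_ofNat {R A M : Type*} [CommSemiring R] [CommSemiring A]
    [AddCommMonoid M] [Algebra R A] [Module A M] [Module R M] (D : Derivation R A M) (n : ℕ)
    [n.AtLeastTwo] : D (ofNat(n) : A) = 0 := by
  rw [← Nat.cast_ofNat]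
  exact D.map_natCast n

theorem Int.eq_zero_of_three_term_rec {R : Type*} [Ring R] {a b : R} {w : ℤ → R}
    (hw : ∀ p, w (p + 3) = a * w (p + 2) - b * w (p + 1) + w p)
    (h0 : w 0 = 0) (h1 : w 1 = 0) (h2 : w 2 = 0) (p : ℤ) : w p = 0 := by
  have window : ∀ n : ℕ, (w n = 0 ∧ w (n + 1) = 0 ∧ w (n + 2) = 0) ∧
      (w (-n) = 0 ∧ w (-n + 1) = 0 ∧ w (-n + 2) = 0) := by
    intro n
    induction n with
    | zero => simpa using ⟨h0, h1, h2⟩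
    | succ n ih =>
      obtain ⟨⟨u0, u1, u2⟩, d0, d1, d2⟩ := ih
      have u3 : w (n + 3) = 0 := by rw [hw, u0, u1, u2]; simp
      have d3 : w (-n - 1) = 0 := by
        have h := hw (-n - 1)
        rw [show -(n : ℤ) - 1 + 3 = -n + 2 by ring, show -(n : ℤ) - 1 + 2 = -n + 1 by ring,
          show -(n : ℤ) - 1 + 1 = -n by ring, d0, d1, d2] at h
        simpa using h.symm
      push_cast
      refine ⟨⟨u1, ?_, ?_⟩, ?_, ?_, ?_⟩
      · rwa [add_assoc, one_add_one_eq_two]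
      · rwa [add_assoc, show (1 : ℤ) + 2 = 3 by norm_num]
      · rwa [neg_add, ← sub_eq_add_neg]
      · rwa [neg_add, add_assoc, show (-1 : ℤ) + 1 = 0 by norm_num, add_zero]
      · rwa [neg_add, add_assoc, show (-1 : ℤ) + 2 = 1 by norm_num]
  obtain ⟨n, rfl | rfl⟩ := Int.eq_nat_or_neg p
  · exact (window n).1.1
  · exact (window n).2.1

theorem MvPolynomial.totalDegree_ofNat_mul_X_mul_le {R σ : Type*} [CommRing R] [Nontrivial R]
    (n : ℕ) [n.AtLeastTwo] (i : σ) (f : MvPolynomial σ R) :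
    (ofNat(n) * X i * f).totalDegree ≤ f.totalDegree + 1 := by
  have h : (ofNat(n) * X i : MvPolynomial σ R).totalDegree ≤ 1 := by
    simpa [← map_ofNat C n] using totalDegree_mul (C (ofNat(n) : R)) (X i : MvPolynomial σ R)
  linarith [totalDegree_mul (ofNat(n) * X i : MvPolynomial σ R) f]

/-- By Newton's identities, `u n` is the `n`-th power sum of the roots of
`t³ - 3 X i t² + 3 X j t - 1`. -/
structure IsCubicPowerSums {R σ : Type*} [CommRing R] (i j : σ) (u : ℕ → MvPolynomial σ R) :
    Prop where
  zero : u 0 = 3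
  one : u 1 = 3 * X i
  two : u 2 = 9 * X i ^ 2 - 6 * X j
  add_three (n : ℕ) : u (n + 3) = 3 * X i * u (n + 2) - 3 * X j * u (n + 1) + u n

namespace IsCubicPowerSums

variable {R σ : Type*} [CommRing R] [Nontrivial R] {i j : σ} {u : ℕ → MvPolynomial σ R}

theorem totalDegree_le (hu : IsCubicPowerSums i j u) (n : ℕ) : (u n).totalDegree ≤ n := by
  induction n using Nat.strong_induction_on with
  | _ n ih =>
    match n, ih with
    | 0, _ => simp [hu.zero, ← map_ofNat C 3]
    | 1, _ => simpa [hu.one] using totalDegree_ofNat_mul_X_mul_le 3 i (1 : MvPolynomial σ R)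
    | 2, _ =>
      rw [hu.two, show (9 : MvPolynomial σ R) * X i ^ 2 = 9 * X i * X i by ring]
      refine (totalDegree_sub _ _).trans (max_le ?_ ?_)
      · simpa using totalDegree_ofNat_mul_X_mul_le 9 i (X i : MvPolynomial σ R)
      · simpa using (totalDegree_ofNat_mul_X_mul_le 6 j (1 : MvPolynomial σ R)).trans (by simp)
    | m + 3, ih =>
      rw [hu.add_three]
      refine (totalDegree_add _ _).trans (max_le ((totalDegree_sub _ _).trans (max_le ?_ ?_)) ?_)
      · exact (totalDegree_ofNat_mul_X_mul_le 3 i _).trans (by linarith [ih (m + 2) (by omega)])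
      · exact (totalDegree_ofNat_mul_X_mul_le 3 j _).trans (by linarith [ih (m + 1) (by omega)])
      · exact (ih m (by omega)).trans (by omega)

theorem totalDegree_sub_leading_le (hu : IsCubicPowerSums i j u) (n : ℕ) :
    (u (n + 1) - 3 ^ (n + 1) * X i ^ (n + 1)).totalDegree ≤ n := by
  induction n using Nat.strong_induction_on with
  | _ n ih =>
    match n, ih with
    | 0, _ => simp [hu.one]
    | 1, _ =>
      rw [hu.two, show (9 : MvPolynomial σ R) * X i ^ 2 - 6 * X j - 3 ^ 2 * X i ^ 2
        = -(6 * X j * 1) by ring, totalDegree_neg]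
      exact (totalDegree_ofNat_mul_X_mul_le 6 j 1).trans (by simp)
    | m + 2, ih =>
      have hlead : u (m + 3) - 3 ^ (m + 3) * X i ^ (m + 3)
          = 3 * X i * (u (m + 2) - 3 ^ (m + 2) * X i ^ (m + 2)) - 3 * X j * u (m + 1) + u m := by
        rw [hu.add_three]
        ring
      rw [hlead]
      refine (totalDegree_add _ _).trans (max_le ((totalDegree_sub _ _).trans (max_le ?_ ?_)) ?_)
      · exact (totalDegree_ofNat_mul_X_mul_le 3 i _).trans (by linarith [ih (m + 1) (by omega)])
      · exact (totalDegree_ofNat_mul_X_mul_le 3 j _).trans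
          (by linarith [hu.totalDegree_le (m + 1)])
      · exact (hu.totalDegree_le m).trans (by omega)

end IsCubicPowerSums

local notation "P₂" => MvPolynomial (Fin 2) ℝ

def carreDuChamp (f : P₂) : Derivation ℝ P₂ P₂ :=
  (2 * (X 1 - X 0 ^ 2) * pderiv 0 f + (1 - X 0 * X 1) * pderiv 1 f) • pderiv 0
    + ((1 - X 0 * X 1) * pderiv 0 f + 2 * (X 0 - X 1 ^ 2) * pderiv 1 f) • pderiv 1

local notation "Γ" => carreDuChamp

theorem carreDuChamp_apply (f g : P₂) : Γ f g =
    2 * (X 1 - X 0 ^ 2) * (pderiv 0 f * pderiv 0 g)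
      + (1 - X 0 * X 1) * (pderiv 0 f * pderiv 1 g + pderiv 1 f * pderiv 0 g)
      + 2 * (X 0 - X 1 ^ 2) * (pderiv 1 f * pderiv 1 g) := by
  simp only [carreDuChamp, Derivation.add_apply, Derivation.smul_apply, smul_eq_mul]
  ring

theorem carreDuChamp_comm (f g : P₂) : Γ f g = Γ g f := by
  rw [carreDuChamp_apply, carreDuChamp_apply]
  ring

@[simp] theorem carreDuChamp_X0_X0 : Γ (X 0) (X 0) = 2 * (X 1 - X 0 ^ 2) := by
  simp [carreDuChamp_apply, pderiv_X]

@[simp] theorem carreDuChamp_X0_X1 : Γ (X 0) (X 1) = 1 - X 0 * X 1 := by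
  simp [carreDuChamp_apply, pderiv_X]

@[simp] theorem carreDuChamp_X1_X0 : Γ (X 1) (X 0) = 1 - X 0 * X 1 := by
  rw [carreDuChamp_comm, carreDuChamp_X0_X1]

@[simp] theorem carreDuChamp_X1_X1 : Γ (X 1) (X 1) = 2 * (X 0 - X 1 ^ 2) := by
  simp [carreDuChamp_apply, pderiv_X]

theorem Lop_add (lam : ℝ) (f g : P₂) : Lop lam (f + g) = Lop lam f + Lop lam g := by
  simp only [Lop, map_add]
  ring

theorem Lop_sub (lam : ℝ) (f g : P₂) : Lop lam (f - g) = Lop lam f - Lop lam g := by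
  simp only [Lop, map_sub]
  ring

theorem Lop_C_mul (lam c : ℝ) (f : P₂) : Lop lam (C c * f) = C c * Lop lam f := by
  simp only [Lop, pderiv_C_mul]
  ring

theorem Lop_ofNat_mul (lam : ℝ) (n : ℕ) [n.AtLeastTwo] (f : P₂) :
    Lop lam (ofNat(n) * f) = ofNat(n) * Lop lam f := by
  simpa only [map_ofNat] using Lop_C_mul lam (ofNat(n)) f

theorem Lop_mul (lam : ℝ) (f g : P₂) :
    Lop lam (f * g) = f * Lop lam g + g * Lop lam f + Γ f g := by
  simp only [Lop, carreDuChamp_apply, Derivation.leibniz, smul_eq_mul, map_add]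
  ring

@[simp] theorem Lop_ofNat (lam : ℝ) (n : ℕ) [n.AtLeastTwo] : Lop lam (ofNat(n) : P₂) = 0 := by
  simp [Lop]

@[simp] theorem Lop_X0 (lam : ℝ) : Lop lam (X 0) = -(C lam * X 0) := by
  simp [Lop, pderiv_X]

@[simp] theorem Lop_X1 (lam : ℝ) : Lop lam (X 1) = -(C lam * X 1) := by
  simp [Lop, pderiv_X]

structure IsDeltoidChebyshev (T : ℤ → P₂) : Prop where
  zero : T 0 = 3
  one : T 1 = 3 * X 0
  two : T 2 = 9 * X 0 ^ 2 - 6 * X 1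
  add_three (p : ℤ) : T (p + 3) = 3 * X 0 * T (p + 2) - 3 * X 1 * T (p + 1) + T p

namespace IsDeltoidChebyshev

variable {T : ℤ → P₂}

theorem neg_one (hT : IsDeltoidChebyshev T) : T (-1) = 3 * X 1 := by
  linear_combination (norm := ring_nf)
    -hT.add_three (-1) + hT.two - 3 * X 0 * hT.one + 3 * X 1 * hT.zero

theorem neg_two (hT : IsDeltoidChebyshev T) : T (-2) = 9 * X 1 ^ 2 - 6 * X 0 := by
  linear_combination (norm := ring_nf)
    -hT.add_three (-2) + hT.one - 3 * X 0 * hT.zero + 3 * X 1 * hT.neg_one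

theorem three (hT : IsDeltoidChebyshev T) : T 3 = 27 * X 0 ^ 3 - 27 * X 0 * X 1 + 3 := by
  linear_combination (norm := ring_nf)
    hT.add_three 0 + 3 * X 0 * hT.two - 3 * X 1 * hT.one + hT.zero

theorem carreDuChamp_X0 (hT : IsDeltoidChebyshev T) (p : ℤ) :
    Γ (X 0) (T p) = (p : P₂) * (X 0 * T p - T (p + 1)) := by
  refine sub_eq_zero.mp (Int.eq_zero_of_three_term_rec (a := 3 * X 0) (b := 3 * X 1)
    (w := fun p => Γ (X 0) (T p) - (p : P₂) * (X 0 * T p - T (p + 1))) (fun p => ?_) ?_ ?_ ?_ p)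
  · simp only [hT.add_three p, map_add, map_sub, Derivation.leibniz, smul_eq_mul,
      Derivation.map_ofNat, carreDuChamp_X0_X0, carreDuChamp_X0_X1]
    push_cast
    linear_combination (norm := ring_nf)
      (p + 3 : P₂) * hT.add_three (p + 1) + 3 * X 0 * hT.add_three p
  · simp [hT.zero]
  · simp [hT.one, hT.two, Derivation.leibniz]
    ring
  · norm_num [hT.three, hT.one, hT.two, Derivation.leibniz]
    ring

theorem carreDuChamp_X1 (hT : IsDeltoidChebyshev T) (p : ℤ) :
    Γ (X 1) (T p) = (p : P₂) * (T (p - 1) - X 1 * T p) := by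
  refine sub_eq_zero.mp (Int.eq_zero_of_three_term_rec (a := 3 * X 0) (b := 3 * X 1)
    (w := fun p => Γ (X 1) (T p) - (p : P₂) * (T (p - 1) - X 1 * T p)) (fun p => ?_) ?_ ?_ ?_ p)
  · simp only [hT.add_three p, map_add, map_sub, Derivation.leibniz, smul_eq_mul,
      Derivation.map_ofNat, carreDuChamp_X1_X0, carreDuChamp_X1_X1]
    push_cast
    linear_combination (norm := ring_nf) -(p : P₂) * hT.add_three (p - 1)
  · simp [hT.zero]
  · norm_num [hT.zero, hT.one, hT.two, Derivation.leibniz]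
    ring
  · norm_num [hT.zero, hT.one, hT.two, Derivation.leibniz]
    ring

theorem Lop_one_eq (hT : IsDeltoidChebyshev T) (p : ℤ) : Lop 1 (T p) = -(p : P₂) ^ 2 * T p := by
  refine sub_eq_zero.mp (Int.eq_zero_of_three_term_rec (a := 3 * X 0) (b := 3 * X 1)
    (w := fun p => Lop 1 (T p) - -(p : P₂) ^ 2 * T p) (fun p => ?_) ?_ ?_ ?_ p)
  · simp only [hT.add_three p, mul_assoc, Lop_add, Lop_sub, Lop_ofNat_mul, Lop_mul, Lop_X0,
      Lop_X1, hT.carreDuChamp_X0, hT.carreDuChamp_X1, map_one, one_mul]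
    push_cast
    linear_combination (norm := ring_nf) -(3 * p + 6 : P₂) * hT.add_three p
  · simp [hT.zero]
  · simp [hT.one, Lop_ofNat_mul]
  · norm_num [hT.two, Lop, pderiv_X]
    ring

/-- With `T p = x ^ p + y ^ p + z ^ p`, the terms of the left side that mix two different roots
cancel, because `x y = z⁻¹`. -/
theorem product_formula (hT : IsDeltoidChebyshev T) (a b : ℤ) :
    T (a + 1) * T (b + 1) + T (a - 1) * T b + T a * T (b - 1) - 3 * X 1 * (T a * T b)
      = T (a + b + 2) - 3 * X 1 * T (a + b) + 2 * T (a + b - 1) := by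
  refine sub_eq_zero.mp (Int.eq_zero_of_three_term_rec (a := 3 * X 0) (b := 3 * X 1)
    (w := fun a => T (a + 1) * T (b + 1) + T (a - 1) * T b + T a * T (b - 1)
      - 3 * X 1 * (T a * T b) - (T (a + b + 2) - 3 * X 1 * T (a + b) + 2 * T (a + b - 1)))
    (fun a => ?_) ?_ ?_ ?_ a)
  · linear_combination (norm := ring_nf)
      T (b + 1) * hT.add_three (a + 1) + T b * hT.add_three (a - 1)
        + (T (b - 1) - 3 * X 1 * T b) * hT.add_three a - hT.add_three (a + b + 2)
        + 3 * X 1 * hT.add_three (a + b) - 2 * hT.add_three (a + b - 1)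
  · norm_num [hT.zero, hT.one, hT.neg_one]
    linear_combination (norm := ring_nf) -hT.add_three (b - 1)
  · norm_num [hT.zero, hT.one, hT.two]
    linear_combination (norm := ring_nf) -hT.add_three b - 3 * X 0 * hT.add_three (b - 1)
  · norm_num [hT.three, hT.one, hT.two]
    linear_combination (norm := ring_nf) -hT.add_three (b + 1) - 3 * X 0 * hT.add_three b
      + (6 * X 1 - 9 * X 0 ^ 2) * hT.add_three (b - 1)

theorem carreDuChamp_eq (hT : IsDeltoidChebyshev T) (a b : ℤ) :
    Γ (T a) (T b) = (a : P₂) * (b : P₂) * (T a * T b - 3 * T (a + b)) := by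
  refine sub_eq_zero.mp (Int.eq_zero_of_three_term_rec (a := 3 * X 0) (b := 3 * X 1)
    (w := fun b => Γ (T a) (T b) - (a : P₂) * (b : P₂) * (T a * T b - 3 * T (a + b)))
    (fun b => ?_) ?_ ?_ ?_ b)
  · simp only [hT.add_three b, map_add, map_sub, Derivation.leibniz, smul_eq_mul,
      Derivation.map_ofNat, carreDuChamp_comm (T a) (X 0), carreDuChamp_comm (T a) (X 1),
      hT.carreDuChamp_X0, hT.carreDuChamp_X1]
    push_cast
    linear_combination (norm := ring_nf) (3 * a * b + 6 * a : P₂) * hT.add_three (a + b)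
      - 3 * a * hT.product_formula a (b + 1)
  · simp [hT.zero]
  · simp only [hT.one, Derivation.leibniz, Derivation.map_ofNat, smul_eq_mul,
      carreDuChamp_comm (T a) (X 0), hT.carreDuChamp_X0]
    push_cast
    ring
  · simp only [hT.two, map_sub, Derivation.leibniz, Derivation.map_ofNat, smul_eq_mul, pow_two,
      carreDuChamp_comm (T a) (X 0), carreDuChamp_comm (T a) (X 1), hT.carreDuChamp_X0,
      hT.carreDuChamp_X1]
    push_cast
    linear_combination (norm := ring_nf) 6 * (a : P₂) * hT.add_three (a - 1)

theorem Lop_one_mul_sub (hT : IsDeltoidChebyshev T) (a b : ℤ) :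
    Lop 1 (T a * T b - T (a + b))
      = C (-((a : ℝ) ^ 2 + (b : ℝ) ^ 2 - a * b)) * (T a * T b - T (a + b)) := by
  rw [Lop_sub, Lop_mul, hT.Lop_one_eq, hT.Lop_one_eq, hT.Lop_one_eq, hT.carreDuChamp_eq]
  simp only [map_neg, map_sub, map_add, map_mul, map_pow, map_intCast]
  push_cast
  ring

theorem isCubicPowerSums_natCast (hT : IsDeltoidChebyshev T) :
    IsCubicPowerSums 0 1 (fun n : ℕ => T n) where
  zero := by simpa using hT.zero
  one := by simpa using hT.one
  two := by simpa using hT.two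
  add_three n := by
    push_cast
    exact hT.add_three n

theorem isCubicPowerSums_neg_natCast (hT : IsDeltoidChebyshev T) :
    IsCubicPowerSums 1 0 (fun n : ℕ => T (-n)) where
  zero := by simpa using hT.zero
  one := by simpa using hT.neg_one
  two := by simpa using hT.neg_two
  add_three n := by
    push_cast
    linear_combination (norm := ring_nf) -hT.add_three (-n - 3)

theorem totalDegree_le (hT : IsDeltoidChebyshev T) (p : ℤ) : (T p).totalDegree ≤ p.natAbs := by
  obtain ⟨n, rfl | rfl⟩ := Int.eq_nat_or_neg p
  · exact hT.isCubicPowerSums_natCast.totalDegree_le n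
  · simpa using hT.isCubicPowerSums_neg_natCast.totalDegree_le n

theorem totalDegree_mul_neg_sub_lt (hT : IsDeltoidChebyshev T) {p q : ℤ} (hp : 1 ≤ p)
    (hq : 1 ≤ q) :
    (T p * T (-q) - T (p - q) - 3 ^ (p + q).toNat * (X 0 ^ p.toNat * X 1 ^ q.toNat)).totalDegree
      < p.toNat + q.toNat := by
  obtain ⟨m, rfl⟩ : ∃ m : ℕ, p = m + 1 := ⟨(p - 1).toNat, by omega⟩
  obtain ⟨n, rfl⟩ : ∃ n : ℕ, q = n + 1 := ⟨(q - 1).toNat, by omega⟩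
  rw [show (m + 1 + (n + 1) : ℤ).toNat = m + 1 + (n + 1) by omega,
    show (m + 1 : ℤ).toNat = m + 1 by omega, show (n + 1 : ℤ).toNat = n + 1 by omega]
  have hE := hT.isCubicPowerSums_natCast.totalDegree_sub_leading_le m
  have hF := hT.isCubicPowerSums_neg_natCast.totalDegree_sub_leading_le n
  push_cast at hE hF
  have hX : ((3 : P₂) ^ (m + 1) * X 0 ^ (m + 1)).totalDegree ≤ m + 1 := by
    rw [show (3 : P₂) ^ (m + 1) = C (3 ^ (m + 1)) by rw [map_pow, map_ofNat]]
    exact (totalDegree_mul _ _).trans (by rw [totalDegree_C, totalDegree_X_pow]; omega)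
  have hTneg := hT.totalDegree_le (-(n + 1))
  have hTdiff := hT.totalDegree_le (m + 1 - (n + 1))
  rw [show T (m + 1) * T (-(n + 1)) - T (m + 1 - (n + 1))
      - 3 ^ (m + 1 + (n + 1)) * (X 0 ^ (m + 1) * X 1 ^ (n + 1))
    = (T (m + 1) - 3 ^ (m + 1) * X 0 ^ (m + 1)) * T (-(n + 1))
      + 3 ^ (m + 1) * X 0 ^ (m + 1) * (T (-(n + 1)) - 3 ^ (n + 1) * X 1 ^ (n + 1))
      - T (m + 1 - (n + 1)) by ring]
  refine ((totalDegree_sub _ _).trans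
    (max_le ((totalDegree_add _ _).trans (max_le ?_ ?_)) ?_)).trans_lt
    (by omega : m + n + 1 < m + 1 + (n + 1))
  · exact (totalDegree_mul _ _).trans (by omega)
  · exact (totalDegree_mul _ _).trans (by omega)
  · exact hTdiff.trans (by omega)

end IsDeltoidChebyshev

section Normalization

variable {T Q : ℤ → P₂}

theorem C_three_zpow_mul {k m n : ℤ} (h : m + n = k) :
    (C ((3 : ℝ) ^ m) : P₂) * C (3 ^ n) = C (3 ^ k) := by
  rw [← map_mul, ← zpow_add₀ three_ne_zero, h]

theorem normalized_mul_sub (hQ : ∀ p : ℤ, Q p = C ((3 : ℝ) ^ (-|p|)) * T p) {p q : ℤ}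
    (hp : 0 ≤ p) (hq : 0 ≤ q) :
    Q p * Q q - Q (p + q) = C ((3 : ℝ) ^ (-(p + q))) * (T p * T q - T (p + q)) := by
  rw [hQ, hQ, hQ, abs_of_nonneg hp, abs_of_nonneg hq, abs_of_nonneg (add_nonneg hp hq)]
  linear_combination (T p * T q) * C_three_zpow_mul (show -p + -q = -(p + q) by ring)

theorem normalized_mul_neg_sub (hQ : ∀ p : ℤ, Q p = C ((3 : ℝ) ^ (-|p|)) * T p) {p q : ℤ}
    (hp : 0 ≤ p) (hq : 0 ≤ q) :
    Q p * Q (-q) - C ((3 : ℝ) ^ (-(2 * min p q))) * Q (p - q)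
      = C ((3 : ℝ) ^ (-(p + q))) * (T p * T (-q) - T (p - q)) := by
  have hexp : -(2 * min p q) + -|p - q| = -(p + q) := by
    rw [abs_eq_max_neg]
    omega
  rw [hQ, hQ, hQ, abs_neg, abs_of_nonneg hp, abs_of_nonneg hq]
  linear_combination (T p * T (-q)) * C_three_zpow_mul (show -p + -q = -(p + q) by ring)
    - T (p - q) * C_three_zpow_mul hexp

end Normalization

theorem stmt_10 (T : ℤ → MvPolynomial (Fin 2) ℝ)
    (hT0 : T 0 = 3) (hT1 : T 1 = 3 * X 0) (hT2 : T 2 = 9 * (X 0) ^ 2 - 6 * X 1)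
    (hrec : ∀ p : ℤ, T (p + 3) = 3 * X 0 * T (p + 2) - 3 * X 1 * T (p + 1) + T p)
    (Q : ℤ → MvPolynomial (Fin 2) ℝ)
    (hQ : ∀ p : ℤ, Q p = C ((3 : ℝ) ^ (-|p|)) * T p) :
    (∀ p q : ℤ, 1 ≤ p → 1 ≤ q →
      Lop 1 (Q p * Q (-q) - C ((3 : ℝ) ^ (-(2 * min p q))) * Q (p - q))
        = C (-(((p : ℝ)) ^ 2 + (q : ℝ) ^ 2 + (p : ℝ) * q)) *
            (Q p * Q (-q) - C ((3 : ℝ) ^ (-(2 * min p q))) * Q (p - q)) ∧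
      ∃ R : MvPolynomial (Fin 2) ℝ,
        Q p * Q (-q) - C ((3 : ℝ) ^ (-(2 * min p q))) * Q (p - q)
          = X 0 ^ p.toNat * X 1 ^ q.toNat + R ∧
        (R = 0 ∨ R.totalDegree < p.toNat + q.toNat)) ∧
    (∀ p q : ℤ, 0 ≤ q → q ≤ p →
      Lop 1 (Q p * Q q - Q (p + q))
        = C (-(((p : ℝ)) ^ 2 + (q : ℝ) ^ 2 - (p : ℝ) * q)) * (Q p * Q q - Q (p + q))) := by
  have hT : IsDeltoidChebyshev T := ⟨hT0, hT1, hT2, hrec⟩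
  refine ⟨fun p q hp hq => ?_, fun p q hq hqp => ?_⟩
  · rw [normalized_mul_neg_sub hQ (by omega) (by omega)]
    have hunit : C ((3 : ℝ) ^ (-(p + q))) * (3 : P₂) ^ (p + q).toNat = 1 := by
      rw [show (3 : P₂) ^ (p + q).toNat = C ((3 : ℝ) ^ ((p + q).toNat : ℤ)) by
          rw [zpow_natCast, map_pow, map_ofNat],
        C_three_zpow_mul (show -(p + q) + (p + q).toNat = 0 by omega), zpow_zero, map_one]
    refine ⟨?_, C (3 ^ (-(p + q))) * (T p * T (-q) - T (p - q)
      - 3 ^ (p + q).toNat * (X 0 ^ p.toNat * X 1 ^ q.toNat)), ?_, Or.inr ?_⟩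
    · rw [Lop_C_mul, sub_eq_add_neg p q, hT.Lop_one_mul_sub, mul_left_comm]
      push_cast
      ring_nf
    · linear_combination (X 0 ^ p.toNat * X 1 ^ q.toNat) * hunit
    · exact (totalDegree_mul _ _).trans_lt (by simpa using hT.totalDegree_mul_neg_sub_lt hp hq)
  · rw [normalized_mul_sub hQ (by omega) hq, Lop_C_mul, hT.Lop_one_mul_sub, mul_left_comm]
end
end

section
/- Let z₁, z₂, z₃ ∈ ℂ with |z₁| = |z₂| = |z₃| = 1 and z₁z₂z₃ = 1; for p ∈ ℤ set T_p = z₁^p + z₂^p + z₃^p. Define the polynomials P̄(X) = (1 − Xz₁)(1 − Xz₂)(1 − Xz₃) and P(Y) = (1 − Y·conj(z₁))(1 − Y·conj(z₂))(1 − Y·conj(z₃)). Then for all complex X, Y with |X| < 1 and |Y| < 1, the family (X^p Y^q (T_p T_{−q} − T_{p−q}))_{(p,q) ∈ ℕ×ℕ} is absolutely summable and Σ_{(p,q)∈ℕ²} X^p Y^q (T_p T_{−q} − T_{p−q}) = (3 − X·P̄′(X)/P̄(X)) · (3 − Y·P′(Y)/P(Y)) + (1/(1 − XY)) · ( X·P̄′(X)/P̄(X)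 + Y·P′(Y)/P(Y) − 3 ), where ′ denotes the complex derivative. -/
/-!
Expanding the power sums, `X^p Y^q (T_p T_{-q} - T_{p-q})` is the sum over `i ≠ j` of
`(X z_i)^p (Y z_j⁻¹)^q`, so the double series is a finite combination of products of two
geometric series with ratios of modulus `< 1`. Writing `a_i = (1 - X z_i)⁻¹` and
`b_j = (1 - Y z_j⁻¹)⁻¹`, its sum is `(∑ a_i)(∑ b_j) - ∑ a_i b_i`. The logarithmic derivative
gives `X P̄'(X)/P̄(X) = 3 - ∑ a_i`, and likewise for `P` since `conj z_i = z_i⁻¹`; the diagonal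
terms are handled by the partial fraction identity `a_i b_i = (a_i + b_i - 1)/(1 - XY)`, which
holds because `(X z_i)(Y z_i⁻¹) = XY`.
-/

open Finset

section

variable {K ι : Type*} [Fintype ι]

theorem hasSum_pow_mul_pow [NormedDivisionRing K] {a b : K} (ha : ‖a‖ < 1) (hb : ‖b‖ < 1) :
    HasSum (fun pq : ℕ × ℕ => a ^ pq.1 * b ^ pq.2) ((1 - a)⁻¹ * (1 - b)⁻¹) := by
  have hsa := hasSum_geometric_of_norm_lt_one ha
  have hsb := hasSum_geometric_of_norm_lt_one hb
  exact hsa.mul hsb <| summable_mul_of_summable_norm' (summable_norm_geometric_of_norm_lt_one ha)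
    hsa.summable (summable_norm_geometric_of_norm_lt_one hb) hsb.summable

theorem inv_one_sub_mul_inv_one_sub [Field K] {u v : K} (hu : 1 - u ≠ 0) (hv : 1 - v ≠ 0)
    (huv : 1 - u * v ≠ 0) :
    (1 - u)⁻¹ * (1 - v)⁻¹ = (1 - u * v)⁻¹ * ((1 - u)⁻¹ + (1 - v)⁻¹ - 1) := by
  field_simp
  ring

theorem mul_logDeriv_prod_one_sub_mul [NontriviallyNormedField K] {w : ι → K} {x : K}
    (hw : ∀ i, 1 - x * w i ≠ 0) :
    x * logDeriv (fun y => ∏ i, (1 - y * w i)) x = Fintype.card ι - ∑ i, (1 - x * w i)⁻¹ := by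
  have hterm : ∀ i, x * logDeriv (fun y => 1 - y * w i) x = 1 - (1 - x * w i)⁻¹ := fun i => by
    have hd : HasDerivAt (fun y => 1 - y * w i) (-w i) x := by
      simpa using ((hasDerivAt_id x).mul_const (w i)).const_sub 1
    rw [logDeriv_apply, hd.deriv]
    field_simp [hw i]
    ring
  rw [logDeriv_prod (fun i _ => hw i) (fun i _ => by fun_prop), mul_sum]
  simp [hterm, sum_sub_distrib]

theorem pow_mul_pow_mul_powerSum_sub [Field K] {z : ι → K}
    (hz : ∀ i, z i ≠ 0) (X Y : K) (p q : ℕ) :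
    X ^ p * Y ^ q * ((∑ i, z i ^ (p : ℤ)) * (∑ i, z i ^ (-(q : ℤ))) - ∑ i, z i ^ ((p : ℤ) - q))
      = ∑ i, ∑ j, (X * z i) ^ p * (Y * (z j)⁻¹) ^ q
        - ∑ i, (X * z i) ^ p * (Y * (z i)⁻¹) ^ q := by
  simp only [zpow_sub₀ (hz _), zpow_neg, zpow_natCast]
  rw [sum_mul_sum, mul_sub, mul_sum, mul_sum]
  congr 1 <;> refine sum_congr rfl fun i _ => ?_
  · rw [mul_sum]
    exact sum_congr rfl fun j _ => by ring
  · ring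

variable {z : ι → K} {X Y : K}

theorem hasSum_pow_mul_pow_mul_powerSum_sub [NormedField K] (hz : ∀ i, z i ≠ 0)
    (hX : ∀ i, ‖X * z i‖ < 1) (hY : ∀ i, ‖Y * (z i)⁻¹‖ < 1) :
    HasSum (fun pq : ℕ × ℕ => X ^ pq.1 * Y ^ pq.2 *
        ((∑ i, z i ^ (pq.1 : ℤ)) * (∑ i, z i ^ (-(pq.2 : ℤ))) - ∑ i, z i ^ ((pq.1 : ℤ) - pq.2)))
      ((∑ i, (1 - X * z i)⁻¹) * (∑ i, (1 - Y * (z i)⁻¹)⁻¹)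
        - ∑ i, (1 - X * z i)⁻¹ * (1 - Y * (z i)⁻¹)⁻¹) := by
  rw [funext fun pq : ℕ × ℕ => pow_mul_pow_mul_powerSum_sub hz X Y pq.1 pq.2, sum_mul_sum]
  exact (hasSum_sum fun i _ => hasSum_sum fun j _ => hasSum_pow_mul_pow (hX i) (hY j)).sub
    (hasSum_sum fun i _ => hasSum_pow_mul_pow (hX i) (hY i))

theorem hasSum_pow_mul_pow_mul_powerSum_sub_eq_logDeriv [NontriviallyNormedField K]
    (hz : ∀ i, z i ≠ 0) (hX : ∀ i, ‖X * z i‖ < 1) (hY : ∀ i, ‖Y * (z i)⁻¹‖ < 1) :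
    HasSum (fun pq : ℕ × ℕ => X ^ pq.1 * Y ^ pq.2 *
        ((∑ i, z i ^ (pq.1 : ℤ)) * (∑ i, z i ^ (-(pq.2 : ℤ))) - ∑ i, z i ^ ((pq.1 : ℤ) - pq.2)))
      ((Fintype.card ι - X * logDeriv (fun x => ∏ i, (1 - x * z i)) X)
          * (Fintype.card ι - Y * logDeriv (fun y => ∏ i, (1 - y * (z i)⁻¹)) Y)
        + (1 - X * Y)⁻¹ * (X * logDeriv (fun x => ∏ i, (1 - x * z i)) X
          + Y * logDeriv (fun y => ∏ i, (1 - y * (z i)⁻¹)) Y - Fintype.card ι)) := by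
  have hA i : 1 - X * z i ≠ 0 := (isUnit_one_sub_of_norm_lt_one (hX i)).ne_zero
  have hB i : 1 - Y * (z i)⁻¹ ≠ 0 := (isUnit_one_sub_of_norm_lt_one (hY i)).ne_zero
  have hdiag i : (1 - X * z i)⁻¹ * (1 - Y * (z i)⁻¹)⁻¹
      = (1 - X * Y)⁻¹ * ((1 - X * z i)⁻¹ + (1 - Y * (z i)⁻¹)⁻¹ - 1) := by
    have hXY : X * z i * (Y * (z i)⁻¹) = X * Y := by field_simp [hz i]
    have hAB : ‖X * z i * (Y * (z i)⁻¹)‖ < 1 := by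
      rw [norm_mul]
      exact mul_lt_one_of_nonneg_of_lt_one_left (norm_nonneg _) (hX i) (hY i).le
    rw [inv_one_sub_mul_inv_one_sub (hA i) (hB i) (isUnit_one_sub_of_norm_lt_one hAB).ne_zero, hXY]
  convert hasSum_pow_mul_pow_mul_powerSum_sub hz hX hY using 1
  rw [mul_logDeriv_prod_one_sub_mul hA, mul_logDeriv_prod_one_sub_mul hB]
  simp only [hdiag, ← mul_sum, sum_sub_distrib, sum_add_distrib, sum_const, card_univ,
    nsmul_eq_mul, mul_one]
  ring

theorem hasSum_pow_mul_pow_mul_powerSum_sub_of_norm_eq_one {z : ι → ℂ}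
    (hz : ∀ i, ‖z i‖ = 1) {X Y : ℂ} (hX : ‖X‖ < 1) (hY : ‖Y‖ < 1) :
    HasSum (fun pq : ℕ × ℕ => X ^ pq.1 * Y ^ pq.2 *
        ((∑ i, z i ^ (pq.1 : ℤ)) * (∑ i, z i ^ (-(pq.2 : ℤ))) - ∑ i, z i ^ ((pq.1 : ℤ) - pq.2)))
      ((Fintype.card ι - X * logDeriv (fun x => ∏ i, (1 - x * z i)) X)
          * (Fintype.card ι - Y * logDeriv (fun y => ∏ i, (1 - y * starRingEnd ℂ (z i))) Y)
        + (1 - X * Y)⁻¹ * (X * logDeriv (fun x => ∏ i, (1 - x * z i)) X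
          + Y * logDeriv (fun y => ∏ i, (1 - y * starRingEnd ℂ (z i))) Y - Fintype.card ι)) := by
  simp only [← Complex.inv_eq_conj (hz _)]
  exact hasSum_pow_mul_pow_mul_powerSum_sub_eq_logDeriv
    (fun i => norm_ne_zero_iff.mp (by simp [hz i]))
    (fun i => by simpa [hz i] using hX) (fun i => by simpa [hz i] using hY)

end

theorem stmt_18_general (z₁ z₂ z₃ : ℂ)
    (h1 : ‖z₁‖ = 1) (h2 : ‖z₂‖ = 1) (h3 : ‖z₃‖ = 1)
    (T : ℤ → ℂ) (hT : ∀ p : ℤ, T p = z₁ ^ p + z₂ ^ p + z₃ ^ p)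
    (Pb P : ℂ → ℂ)
    (hPb : ∀ X : ℂ, Pb X = (1 - X * z₁) * (1 - X * z₂) * (1 - X * z₃))
    (hP : ∀ Y : ℂ, P Y = (1 - Y * starRingEnd ℂ z₁) * (1 - Y * starRingEnd ℂ z₂) *
      (1 - Y * starRingEnd ℂ z₃)) :
    ∀ X Y : ℂ, ‖X‖ < 1 → ‖Y‖ < 1 →
      Summable (fun pq : ℕ × ℕ =>
        ‖X ^ pq.1 * Y ^ pq.2 *
          (T pq.1 * T (-(pq.2 : ℤ)) - T ((pq.1 : ℤ) - (pq.2 : ℤ)))‖) ∧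
      ∑' pq : ℕ × ℕ, X ^ pq.1 * Y ^ pq.2 *
          (T pq.1 * T (-(pq.2 : ℤ)) - T ((pq.1 : ℤ) - (pq.2 : ℤ)))
        = (3 - X * deriv Pb X / Pb X) * (3 - Y * deriv P Y / P Y)
          + (1 / (1 - X * Y)) * (X * deriv Pb X / Pb X + Y * deriv P Y / P Y - 3) := by
  intro X Y hX hY
  set z : Fin 3 → ℂ := ![z₁, z₂, z₃]
  have hz : ∀ i, ‖z i‖ = 1 := by simp [Fin.forall_fin_succ, z, h1, h2, h3]
  have hT' : T = fun p => ∑ i, z i ^ p := funext fun p => by simp [hT, Fin.sum_univ_three, z]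
  have hPb' : Pb = fun x => ∏ i, (1 - x * z i) :=
    funext fun x => by simp [hPb, Fin.prod_univ_three, z]
  have hP' : P = fun y => ∏ i, (1 - y * starRingEnd ℂ (z i)) :=
    funext fun y => by simp [hP, Fin.prod_univ_three, z]
  have hsum := hasSum_pow_mul_pow_mul_powerSum_sub_of_norm_eq_one hz hX hY
  rw [Fintype.card_fin] at hsum
  subst hT' hPb' hP'
  refine ⟨summable_norm_iff.mpr hsum.summable, ?_⟩
  rw [hsum.tsum_eq, mul_div_assoc, mul_div_assoc, ← logDeriv_apply, ← logDeriv_apply, one_div]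
  norm_num

theorem stmt_18 (z₁ z₂ z₃ : ℂ)
    (h1 : ‖z₁‖ = 1) (h2 : ‖z₂‖ = 1) (h3 : ‖z₃‖ = 1)
    (hprod : z₁ * z₂ * z₃ = 1)
    (T : ℤ → ℂ) (hT : ∀ p : ℤ, T p = z₁ ^ p + z₂ ^ p + z₃ ^ p)
    (Pb P : ℂ → ℂ)
    (hPb : ∀ X : ℂ, Pb X = (1 - X * z₁) * (1 - X * z₂) * (1 - X * z₃))
    (hP : ∀ Y : ℂ, P Y = (1 - Y * starRingEnd ℂ z₁) * (1 - Y * starRingEnd ℂ z₂) *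
      (1 - Y * starRingEnd ℂ z₃)) :
    ∀ X Y : ℂ, ‖X‖ < 1 → ‖Y‖ < 1 →
      Summable (fun pq : ℕ × ℕ =>
        ‖X ^ pq.1 * Y ^ pq.2 *
          (T pq.1 * T (-(pq.2 : ℤ)) - T ((pq.1 : ℤ) - (pq.2 : ℤ)))‖) ∧
      ∑' pq : ℕ × ℕ, X ^ pq.1 * Y ^ pq.2 *
          (T pq.1 * T (-(pq.2 : ℤ)) - T ((pq.1 : ℤ) - (pq.2 : ℤ)))
        = (3 - X * deriv Pb X / Pb X) * (3 - Y * deriv P Y / P Y)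
          + (1 / (1 - X * Y)) * (X * deriv Pb X / Pb X + Y * deriv P Y / P Y - 3) :=
  stmt_18_general z₁ z₂ z₃ h1 h2 h3 T hT Pb P hPb hP
end
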